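/- (Converse bound R_Y ≥ 1) In the secure aggregation with an oblivious server model, assuming only the correctness constraint, for every user u ∈ [K] one has H(Y_u | W_u, Z_1, …, Z_K) ≥ L; consequently H(Y_u) ≥ L, L_Y ≥ L, and R_Y = L_Y/L ≥ 1. -/

import Mathlib

open Classical
open scoped BigOperators

/-- Probability of the event `E` under the probability mass function `p`
on a finite sample space `Ω`. -/
noncomputable def pr {Ω : Type*} [Fintype Ω] (p : Ω → ℝ) (E : Ω → Prop) : ℝ :=
  ∑ ω, if E ω then p ω else 0

/-- Shannon entropy of the random variable `X` in base-`q` units. -/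
noncomputable def ent {Ω α : Type*} [Fintype Ω] [Fintype α] (q : ℕ) (p : Ω → ℝ)
    (X : Ω → α) : ℝ :=
  -∑ a, pr p (fun ω => X ω = a) * Real.logb q (pr p (fun ω => X ω = a))

/-- Conditional entropy `H(X | Y) = H(X, Y) − H(Y)`, base `q`. -/
noncomputable def condEnt {Ω α β : Type*} [Fintype Ω] [Fintype α] [Fintype β]
    (q : ℕ) (p : Ω → ℝ) (X : Ω → α) (Y : Ω → β) : ℝ :=
  ent q p (fun ω => (X ω, Y ω)) - ent q p Y

/-- Mutual information `I(X ; Y) = H(X) + H(Y) − H(X, Y)`, base `q`. -/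
noncomputable def mutInf {Ω α β : Type*} [Fintype Ω] [Fintype α] [Fintype β]
    (q : ℕ) (p : Ω → ℝ) (X : Ω → α) (Y : Ω → β) : ℝ :=
  ent q p X + ent q p Y - ent q p (fun ω => (X ω, Y ω))

/-- Conditional mutual information
`I(X ; Y | Z) = H(X, Z) + H(Y, Z) − H(X, Y, Z) − H(Z)`, base `q`. -/
noncomputable def condMutInf {Ω α β γ : Type*} [Fintype Ω] [Fintype α] [Fintype β] [Fintype γ]
    (q : ℕ) (p : Ω → ℝ) (X : Ω → α) (Y : Ω → β) (Z : Ω → γ) : ℝ :=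
  ent q p (fun ω => (X ω, Z ω)) + ent q p (fun ω => (Y ω, Z ω))
    - ent q p (fun ω => (X ω, Y ω, Z ω)) - ent q p Z

/-! ### Auxiliary lemmas about `pr` -/

section PrLemmas
variable {Ω : Type*} [Fintype Ω] {p : Ω → ℝ} {α β : Type*} [Fintype α] [Fintype β]

lemma pr_nonneg (hp0 : ∀ ω, 0 ≤ p ω) (E : Ω → Prop) : 0 ≤ pr p E := by
  refine Finset.sum_nonneg fun ω _ => ?_
  split <;> simp [hp0 ω]

lemma pr_congr {E E' : Ω → Prop} (h : ∀ ω, E ω ↔ E' ω) : pr p E = pr p E' := by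
  unfold pr; refine Finset.sum_congr rfl fun ω _ => by simp [h ω]

lemma pr_congr_ae {E E' : Ω → Prop} (h : ∀ ω, p ω ≠ 0 → (E ω ↔ E' ω)) :
    pr p E = pr p E' := by
  unfold pr; refine Finset.sum_congr rfl fun ω _ => ?_
  by_cases hω : p ω = 0
  · split <;> split <;> simp [hω]
  · simp [h ω hω]

lemma pr_false : pr p (fun _ => False) = 0 := by simp [pr]

lemma pr_mono (hp0 : ∀ ω, 0 ≤ p ω) {E E' : Ω → Prop} (h : ∀ ω, E ω → E' ω) :
    pr p E ≤ pr p E' := by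
  refine Finset.sum_le_sum fun ω _ => ?_
  by_cases hE : E ω
  · simp [hE, h ω hE]
  · simp only [hE, if_false]; split <;> simp [hp0 ω]

lemma le_pr (hp0 : ∀ ω, 0 ≤ p ω) {E : Ω → Prop} {ω₀ : Ω} (h : E ω₀) :
    p ω₀ ≤ pr p E := by
  classical
  calc p ω₀ = ∑ ω ∈ {ω₀}, (if E ω then p ω else 0) := by simp [h]
  _ ≤ pr p E := Finset.sum_le_sum_of_subset_of_nonneg (Finset.subset_univ _)
      (fun ω _ _ => by split <;> simp [hp0 ω])

lemma sum_pr_and (X : Ω → α) (E : Ω → Prop) :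
    ∑ a, pr p (fun ω => X ω = a ∧ E ω) = pr p E := by
  unfold pr
  rw [Finset.sum_comm]
  refine Finset.sum_congr rfl fun ω _ => ?_
  by_cases hE : E ω
  · simp [hE]
  · simp [hE]

lemma sum_pr (hp1 : (∑ ω, p ω) = 1) (X : Ω → α) :
    ∑ a, pr p (fun ω => X ω = a) = 1 := by
  unfold pr
  rw [Finset.sum_comm]
  simpa using hp1

lemma pr_decomp {γ : Type*} [Fintype γ] (V : Ω → γ) (Q : γ → Prop) (E : Ω → Prop) :
    pr p (fun ω => Q (V ω) ∧ E ω)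
      = ∑ v, if Q v then pr p (fun ω => V ω = v ∧ E ω) else 0 := by
  have h1 : ∀ v, (if Q v then pr p (fun ω => V ω = v ∧ E ω) else 0)
      = pr p (fun ω => V ω = v ∧ Q (V ω) ∧ E ω) := by
    intro v
    by_cases hc : Q v
    · rw [if_pos hc]
      refine pr_congr (fun ω => ⟨fun ⟨h, he⟩ => ⟨h, h ▸ hc, he⟩, fun ⟨h, _, he⟩ => ⟨h, he⟩⟩)
    · rw [if_neg hc]
      refine ((pr_congr (E' := fun _ => False) (fun ω => ?_)).trans pr_false).symm
      exact ⟨fun ⟨h, hq, _⟩ => hc (h ▸ hq), False.elim⟩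
  rw [Finset.sum_congr rfl (fun v _ => h1 v), sum_pr_and V (fun ω => Q (V ω) ∧ E ω)]

end PrLemmas

/-! ### Auxiliary lemmas about `ent` and `condEnt` -/

section EntLemmas
variable {Ω : Type*} [Fintype Ω] {p : Ω → ℝ} {α β : Type*} [Fintype α] [Fintype β]

lemma ent_congr_ae (q : ℕ) {X X' : Ω → α} (h : ∀ ω, p ω ≠ 0 → X ω = X' ω) :
    ent q p X = ent q p X' := by
  unfold ent
  refine congrArg _ (Finset.sum_congr rfl fun a _ => ?_)
  rw [pr_congr_ae (fun ω hω => by rw [h ω hω])]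

lemma ent_comp_inj (q : ℕ) (X : Ω → α) {h : α → β} (hinj : Function.Injective h) :
    ent q p (fun ω => h (X ω)) = ent q p X := by
  unfold ent
  refine congrArg _ ?_
  rw [← Finset.sum_subset (Finset.subset_univ (Finset.image h Finset.univ))
    (fun b _ hb => ?_), Finset.sum_image (fun a _ a' _ hh => hinj hh)]
  · refine Finset.sum_congr rfl fun a _ => ?_
    rw [pr_congr (fun ω => by
      constructor <;> intro hh <;> [exact hinj hh; (show h (X ω) = h a; rw [hh])])]
  · have : pr p (fun ω => h (X ω) = b) = 0 := by
      rw [pr_congr (E' := fun _ => False) (fun ω => ?_), pr_false]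
      simp only [false_iff, iff_false]
      intro hc
      exact hb (Finset.mem_image.2 ⟨X ω, Finset.mem_univ _, hc⟩)
    simp [this]

lemma ent_pair_eq (q : ℕ) (X : Ω → α) (T : Ω → β) :
    ent q p (fun ω => (X ω, T ω))
      = -∑ b, ∑ a, pr p (fun ω => X ω = a ∧ T ω = b)
          * Real.logb q (pr p (fun ω => X ω = a ∧ T ω = b)) := by
  unfold ent
  rw [Fintype.sum_prod_type, Finset.sum_comm]
  refine congrArg _ (Finset.sum_congr rfl fun b _ => Finset.sum_congr rfl fun a _ => ?_)
  rw [pr_congr (E' := fun ω => X ω = a ∧ T ω = b) (fun ω => by simp [Prod.ext_iff])]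

lemma term_nonneg {q : ℕ} (hq : 1 < q) {r s : ℝ} (h0 : 0 ≤ r) (hrs : r ≤ s) :
    0 ≤ r * Real.logb q s - r * Real.logb q r := by
  rcases eq_or_lt_of_le h0 with h | h
  · simp [← h]
  · have hs : (0:ℝ) < s := lt_of_lt_of_le h hrs
    have : Real.logb q r ≤ Real.logb q s :=
      (Real.logb_le_logb (by exact_mod_cast hq) h hs).mpr hrs
    nlinarith

lemma condEnt_eq_sum (q : ℕ) (X : Ω → α) (T : Ω → β) :
    condEnt q p X T = ∑ b, ∑ a,
      (pr p (fun ω => X ω = a ∧ T ω = b) * Real.logb q (pr p (fun ω => T ω = b))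
        - pr p (fun ω => X ω = a ∧ T ω = b)
            * Real.logb q (pr p (fun ω => X ω = a ∧ T ω = b))) := by
  unfold condEnt
  rw [ent_pair_eq]
  unfold ent
  have h1 : ∀ b, pr p (fun ω => T ω = b) * Real.logb q (pr p (fun ω => T ω = b))
      = ∑ a, pr p (fun ω => X ω = a ∧ T ω = b) * Real.logb q (pr p (fun ω => T ω = b)) := by
    intro b
    rw [← Finset.sum_mul, sum_pr_and]
  rw [Finset.sum_congr rfl (fun b _ => h1 b)]
  simp only [Finset.sum_sub_distrib]
  ring

lemma condEnt_nonneg {q : ℕ} (hq : 1 < q) (hp0 : ∀ ω, 0 ≤ p ω) (X : Ω → α) (T : Ω → β) :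
    0 ≤ condEnt q p X T := by
  rw [condEnt_eq_sum q X T]
  refine Finset.sum_nonneg fun b _ => Finset.sum_nonneg fun a _ => ?_
  exact term_nonneg hq (pr_nonneg hp0 _) (pr_mono hp0 (fun ω h => h.2))

lemma condEnt_zero_of_fun (q : ℕ) (X : Ω → α) (T : Ω → β) (g : β → α)
    (h : ∀ ω, p ω ≠ 0 → X ω = g (T ω)) : condEnt q p X T = 0 := by
  unfold condEnt
  rw [ent_congr_ae q (X' := fun ω => (g (T ω), T ω))
    (fun ω hω => by rw [h ω hω])]
  rw [ent_comp_inj q T (h := fun t => (g t, t)) (fun t t' ht => (Prod.ext_iff.1 ht).2)]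
  ring

lemma exists_fun_of_condEnt_zero {q : ℕ} (hq : 1 < q) (hp0 : ∀ ω, 0 ≤ p ω)
    [Nonempty α] (X : Ω → α) (T : Ω → β)
    (h : condEnt q p X T = 0) : ∃ g : β → α, ∀ ω, p ω ≠ 0 → X ω = g (T ω) := by
  rw [condEnt_eq_sum q X T] at h
  have hterm : ∀ b a, pr p (fun ω => X ω = a ∧ T ω = b) * Real.logb q (pr p (fun ω => T ω = b))
      - pr p (fun ω => X ω = a ∧ T ω = b)
          * Real.logb q (pr p (fun ω => X ω = a ∧ T ω = b)) = 0 := by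
    intro b a
    have hb := (Finset.sum_eq_zero_iff_of_nonneg (fun b _ =>
      Finset.sum_nonneg fun a _ => term_nonneg hq (pr_nonneg hp0 _)
        (pr_mono hp0 (fun ω hh => hh.2)))).1 h b (Finset.mem_univ b)
    exact (Finset.sum_eq_zero_iff_of_nonneg (fun a _ => term_nonneg hq (pr_nonneg hp0 _)
        (pr_mono hp0 (fun ω hh => hh.2)))).1 hb a (Finset.mem_univ a)
  have hkey : ∀ b a, 0 < pr p (fun ω => X ω = a ∧ T ω = b) →
      pr p (fun ω => X ω = a ∧ T ω = b) = pr p (fun ω => T ω = b) := by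
    intro b a hpos
    have hle : pr p (fun ω => X ω = a ∧ T ω = b) ≤ pr p (fun ω => T ω = b) :=
      pr_mono hp0 (fun ω hh => hh.2)
    have hs : 0 < pr p (fun ω => T ω = b) := lt_of_lt_of_le hpos hle
    have hlog : Real.logb q (pr p (fun ω => T ω = b))
        = Real.logb q (pr p (fun ω => X ω = a ∧ T ω = b)) := by
      have := hterm b a
      have h2 : pr p (fun ω => X ω = a ∧ T ω = b)
          * (Real.logb q (pr p (fun ω => T ω = b))
            - Real.logb q (pr p (fun ω => X ω = a ∧ T ω = b))) = 0 := by ring_nf; linarith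
      rcases mul_eq_zero.1 h2 with h3 | h3
      · exact absurd h3 (ne_of_gt hpos)
      · linarith
    refine le_antisymm hle ?_
    exact (Real.logb_le_logb (b := q) (by exact_mod_cast hq) hs hpos).mp (le_of_eq hlog)
  refine ⟨fun b => if hb : ∃ a, 0 < pr p (fun ω => X ω = a ∧ T ω = b)
    then hb.choose else Classical.arbitrary α, fun ω hω => ?_⟩
  set b := T ω with hbdef
  have hpos : 0 < pr p (fun ω' => X ω' = X ω ∧ T ω' = b) := by
    refine lt_of_lt_of_le (lt_of_le_of_ne (hp0 ω) (Ne.symm hω)) (le_pr hp0 ⟨rfl, rfl⟩)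
  have hex : ∃ a, 0 < pr p (fun ω' => X ω' = a ∧ T ω' = b) := ⟨X ω, hpos⟩
  simp only [hex, dif_pos]
  set a₁ := hex.choose with ha1
  have hpos1 : 0 < pr p (fun ω' => X ω' = a₁ ∧ T ω' = b) := hex.choose_spec
  by_contra hne
  have h1 := hkey b (X ω) hpos
  have h2 := hkey b a₁ hpos1
  have hsum : pr p (fun ω' => X ω' = X ω ∧ T ω' = b)
      + pr p (fun ω' => X ω' = a₁ ∧ T ω' = b) ≤ pr p (fun ω' => T ω' = b) := by
    rw [← sum_pr_and X (fun ω' => T ω' = b)]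
    calc pr p (fun ω' => X ω' = X ω ∧ T ω' = b) + pr p (fun ω' => X ω' = a₁ ∧ T ω' = b)
        = ∑ a ∈ ({X ω, a₁} : Finset α), pr p (fun ω' => X ω' = a ∧ T ω' = b) := by
          rw [Finset.sum_pair hne]
      _ ≤ ∑ a, pr p (fun ω' => X ω' = a ∧ T ω' = b) :=
          Finset.sum_le_sum_of_subset_of_nonneg (Finset.subset_univ _)
            (fun a _ _ => pr_nonneg hp0 _)
  rw [h1, h2] at hsum
  linarith

/-- Gibbs' inequality -/
lemma gibbs {ι : Type*} [Fintype ι] (r u : ι → ℝ) (hr : ∀ i, 0 ≤ r i)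
    (hr1 : ∑ i, r i = 1) (hu : ∀ i, 0 ≤ u i) (hu1 : ∑ i, u i ≤ 1)
    (h : ∀ i, 0 < r i → 0 < u i) :
    ∑ i, r i * Real.log (u i) ≤ ∑ i, r i * Real.log (r i) := by
  rw [← sub_nonneg, ← Finset.sum_sub_distrib]
  set S := Finset.univ.filter (fun i => 0 < r i) with hS
  have hzero : ∀ i ∈ Finset.univ, i ∉ S →
      r i * Real.log (r i) - r i * Real.log (u i) = 0 := by
    intro i _ hi
    have : r i = 0 := by
      by_contra hne
      exact hi (Finset.mem_filter.2 ⟨Finset.mem_univ i, lt_of_le_of_ne (hr i) (Ne.symm hne)⟩)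
    simp [this]
  rw [← Finset.sum_subset (Finset.subset_univ S) hzero]
  have key : ∀ i ∈ S, r i - u i ≤ r i * Real.log (r i) - r i * Real.log (u i) := by
    intro i hi
    have hri : 0 < r i := (Finset.mem_filter.1 hi).2
    have hui : 0 < u i := h i hri
    have hlog : Real.log (u i / r i) ≤ u i / r i - 1 :=
      Real.log_le_sub_one_of_pos (div_pos hui hri)
    rw [Real.log_div (ne_of_gt hui) (ne_of_gt hri)] at hlog
    have := mul_le_mul_of_nonneg_left hlog (le_of_lt hri)
    have hr' : r i * (u i / r i - 1) = u i - r i := by field_simp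
    nlinarith
  have h2 : ∑ i ∈ S, (r i - u i) ≤ ∑ i ∈ S, (r i * Real.log (r i) - r i * Real.log (u i)) :=
    Finset.sum_le_sum key
  have h3 : ∑ i ∈ S, r i = 1 := by
    rw [← hr1]
    refine Finset.sum_subset (Finset.subset_univ S) (fun i _ hi => ?_)
    by_contra hne
    exact hi (Finset.mem_filter.2 ⟨Finset.mem_univ i, lt_of_le_of_ne (hr i) (Ne.symm hne)⟩)
  have h4 : ∑ i ∈ S, u i ≤ 1 :=
    le_trans (Finset.sum_le_sum_of_subset_of_nonneg (Finset.subset_univ S)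
      (fun i _ _ => hu i)) hu1
  rw [Finset.sum_sub_distrib] at h2
  linarith

lemma sum_logb_eq (q : ℕ) {ι : Type*} [Fintype ι] (g : ι → ℝ) :
    ∑ i, g i * Real.logb q (g i) = (∑ i, g i * Real.log (g i)) / Real.log q := by
  rw [Finset.sum_div]
  exact Finset.sum_congr rfl fun i _ => by rw [Real.logb, mul_div_assoc]

/-- subadditivity : H(X,T) ≤ H(X) + H(T) -/
lemma ent_pair_le {q : ℕ} (hq : 1 < q) (hp0 : ∀ ω, 0 ≤ p ω) (hp1 : (∑ ω, p ω) = 1)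
    (X : Ω → α) (T : Ω → β) :
    ent q p (fun ω => (X ω, T ω)) ≤ ent q p X + ent q p T := by
  have hlogq : 0 < Real.log q := Real.log_pos (by exact_mod_cast hq)
  set R : α × β → ℝ := fun c => pr p (fun ω => X ω = c.1 ∧ T ω = c.2) with hR
  set U : α × β → ℝ := fun c => pr p (fun ω => X ω = c.1) * pr p (fun ω => T ω = c.2) with hU
  have hRX : ∀ c, R c ≤ pr p (fun ω => X ω = c.1) := fun c => pr_mono hp0 (fun ω h => h.1)
  have hRT : ∀ c, R c ≤ pr p (fun ω => T ω = c.2) := fun c => pr_mono hp0 (fun ω h => h.2)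
  have hgibbs : ∑ c, R c * Real.log (U c) ≤ ∑ c, R c * Real.log (R c) := by
    refine gibbs R U (fun c => pr_nonneg hp0 _) ?_
      (fun c => mul_nonneg (pr_nonneg hp0 _) (pr_nonneg hp0 _)) ?_ ?_
    · rw [Fintype.sum_prod_type]
      rw [Finset.sum_comm]
      rw [Finset.sum_congr rfl (fun b _ => sum_pr_and X (fun ω => T ω = b))]
      exact sum_pr hp1 T
    · refine le_of_eq ?_
      rw [Fintype.sum_prod_type]
      simp only [hU]
      rw [← Finset.sum_mul_sum, sum_pr hp1 X, sum_pr hp1 T, one_mul]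
    · intro c hc
      exact mul_pos (lt_of_lt_of_le hc (hRX c)) (lt_of_lt_of_le hc (hRT c))
  have hsplit : ∑ c, R c * Real.log (U c)
      = ∑ c, R c * Real.log (pr p (fun ω => X ω = c.1))
        + ∑ c, R c * Real.log (pr p (fun ω => T ω = c.2)) := by
    rw [← Finset.sum_add_distrib]
    refine Finset.sum_congr rfl fun c _ => ?_
    by_cases hc : R c = 0
    · simp [hc]
    · have hc' : 0 < R c := lt_of_le_of_ne (pr_nonneg hp0 _) (Ne.symm hc)
      rw [hU, Real.log_mul (ne_of_gt (lt_of_lt_of_le hc' (hRX c)))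
        (ne_of_gt (lt_of_lt_of_le hc' (hRT c)))]
      ring
  have hmargX : ∑ c : α × β, R c * Real.log (pr p (fun ω => X ω = c.1))
      = ∑ a, pr p (fun ω => X ω = a) * Real.log (pr p (fun ω => X ω = a)) := by
    rw [Fintype.sum_prod_type]
    refine Finset.sum_congr rfl fun a _ => ?_
    rw [show (∑ y : β, R (a, y) * Real.log (pr p fun ω => X ω = (a, y).1))
      = ∑ y : β, R (a, y) * Real.log (pr p fun ω => X ω = a) from rfl, ← Finset.sum_mul]
    congr 1
    have : ∀ b, R (a, b) = pr p (fun ω => T ω = b ∧ X ω = a) :=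
      fun b => pr_congr (fun ω => and_comm)
    rw [Finset.sum_congr rfl (fun b _ => this b)]
    exact sum_pr_and T (fun ω => X ω = a)
  have hmargT : ∑ c : α × β, R c * Real.log (pr p (fun ω => T ω = c.2))
      = ∑ b, pr p (fun ω => T ω = b) * Real.log (pr p (fun ω => T ω = b)) := by
    rw [Fintype.sum_prod_type, Finset.sum_comm]
    refine Finset.sum_congr rfl fun b _ => ?_
    rw [show (∑ x : α, R (x, b) * Real.log (pr p fun ω => T ω = (x, b).2))
      = ∑ x : α, R (x, b) * Real.log (pr p fun ω => T ω = b) from rfl, ← Finset.sum_mul]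
    congr 1
    exact sum_pr_and X (fun ω => T ω = b)
  have hpairval : ent q p (fun ω => (X ω, T ω)) = -(∑ c, R c * Real.log (R c)) / Real.log q := by
    unfold ent
    rw [neg_div]
    congr 1
    rw [← sum_logb_eq]
    refine Finset.sum_congr rfl fun c _ => ?_
    have : pr p (fun ω => (X ω, T ω) = c) = R c :=
      pr_congr (fun ω => by simp [hR, Prod.ext_iff])
    rw [this]
  have hXval : ent q p X = -(∑ a, pr p (fun ω => X ω = a)
      * Real.log (pr p (fun ω => X ω = a))) / Real.log q := by
    unfold ent; rw [neg_div, ← sum_logb_eq]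
  have hTval : ent q p T = -(∑ b, pr p (fun ω => T ω = b)
      * Real.log (pr p (fun ω => T ω = b))) / Real.log q := by
    unfold ent; rw [neg_div, ← sum_logb_eq]
  rw [hpairval, hXval, hTval, ← add_div, div_le_div_iff_of_pos_right hlogq]
  rw [hsplit, hmargX, hmargT] at hgibbs
  linarith

/-- maximum entropy bound -/
lemma ent_le_card {q : ℕ} (hq : 1 < q) (hp0 : ∀ ω, 0 ≤ p ω) (hp1 : (∑ ω, p ω) = 1)
    [Nonempty α] (X : Ω → α) :
    ent q p X ≤ Real.logb q (Fintype.card α) := by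
  have hlogq : 0 < Real.log q := Real.log_pos (by exact_mod_cast hq)
  have hN : (0:ℝ) < (Fintype.card α : ℝ) := by exact_mod_cast Fintype.card_pos
  have hgibbs := gibbs (fun a => pr p (fun ω => X ω = a))
    (fun _ => (Fintype.card α : ℝ)⁻¹) (fun a => pr_nonneg hp0 _) (sum_pr hp1 X)
    (fun _ => by positivity)
    (by rw [Finset.sum_const, Finset.card_univ, nsmul_eq_mul, mul_inv_cancel₀ (ne_of_gt hN)])
    (fun a _ => by positivity)
  have hlogc : ∀ a : α, Real.log ((Fintype.card α : ℝ)⁻¹) = -Real.log (Fintype.card α) :=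
    fun a => Real.log_inv _
  rw [Finset.sum_congr rfl (fun a _ => by rw [hlogc a])] at hgibbs
  have hsum : ∑ a, pr p (fun ω => X ω = a) * -Real.log (Fintype.card α)
      = -Real.log (Fintype.card α) := by
    rw [← Finset.sum_mul, sum_pr hp1 X, one_mul]
  rw [hsum] at hgibbs
  unfold ent
  rw [sum_logb_eq, Real.logb, ← neg_div, div_le_div_iff_of_pos_right hlogq]
  have := hgibbs
  simp only [neg_le] at *
  linarith

/-- conditionally uniform variable: H(T | C) = logb q N -/
lemma condEnt_of_uniform {q : ℕ} (hq : 1 < q) (hp0 : ∀ ω, 0 ≤ p ω) (hp1 : (∑ ω, p ω) = 1)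
    [Nonempty α] (T : Ω → α) (C : Ω → β)
    (h : ∀ t c, pr p (fun ω => T ω = t ∧ C ω = c)
      = (Fintype.card α : ℝ)⁻¹ * pr p (fun ω => C ω = c)) :
    condEnt q p T C = Real.logb q (Fintype.card α) := by
  have hN : (0:ℝ) < (Fintype.card α : ℝ) := by exact_mod_cast Fintype.card_pos
  unfold condEnt
  rw [ent_pair_eq]
  have hinner : ∀ c, ∑ t : α, pr p (fun ω => T ω = t ∧ C ω = c)
      * Real.logb q (pr p (fun ω => T ω = t ∧ C ω = c))
      = pr p (fun ω => C ω = c) * Real.logb q (pr p (fun ω => C ω = c))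
        - pr p (fun ω => C ω = c) * Real.logb q (Fintype.card α) := by
    intro c
    rw [Finset.sum_congr rfl (fun t _ => by rw [h t c])]
    rw [Finset.sum_const, Finset.card_univ, nsmul_eq_mul]
    rcases eq_or_lt_of_le (pr_nonneg hp0 (fun ω => C ω = c)) with hz | hpos
    · rw [← hz]; simp
    · have hlog : Real.logb q ((Fintype.card α : ℝ)⁻¹ * pr p (fun ω => C ω = c))
          = Real.logb q (pr p (fun ω => C ω = c)) - Real.logb q (Fintype.card α) := by
        rw [Real.logb_mul (by positivity) (ne_of_gt hpos), Real.logb_inv]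
        ring
      rw [hlog]
      have hN' : (Fintype.card α : ℝ) ≠ 0 := ne_of_gt hN
      field_simp
  rw [Finset.sum_congr rfl (fun c _ => hinner c)]
  rw [Finset.sum_sub_distrib]
  unfold ent
  rw [← Finset.sum_mul, sum_pr hp1 C, one_mul]
  ring

end EntLemmas

/-! ### The shift equivalence and the uniformity computation -/

/-- shifting one coordinate is a bijection -/
def updEquiv {ι γ : Type*} [DecidableEq ι] [AddGroup γ] (i : ι) (δ : γ) :
    (ι → γ) ≃ (ι → γ) where
  toFun v := Function.update v i (v i + δ)
  invFun v := Function.update v i (v i - δ)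
  left_inv v := by
    funext k
    rcases eq_or_ne k i with rfl | hk <;> simp [Function.update_apply, *]
  right_inv v := by
    funext k
    rcases eq_or_ne k i with rfl | hk <;> simp [Function.update_apply, *]

lemma sum_erase_updEquiv {K : ℕ} {γ : Type*} [AddCommGroup γ] {u v₀ : Fin K}
    (hne : v₀ ≠ u) (δ : γ) (v : Fin K → γ) :
    (∑ k ∈ Finset.univ.erase u, (updEquiv v₀ δ) v k)
      = (∑ k ∈ Finset.univ.erase u, v k) + δ ∧ ((updEquiv v₀ δ) v) u = v u := by
  constructor
  · have hv₀ : v₀ ∈ Finset.univ.erase u := Finset.mem_erase.2 ⟨hne, Finset.mem_univ _⟩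
    rw [show ((updEquiv v₀ δ) v) = Function.update v v₀ (v v₀ + δ) from rfl]
    rw [Finset.sum_update_of_mem hv₀]
    rw [← Finset.add_sum_erase _ v hv₀]
    simp only [Finset.sdiff_singleton_eq_erase]
    abel
  · exact Function.update_of_ne (Ne.symm hne) _ _

/-- the sum of the other users' inputs is uniform given `(W_u, Z)`. -/
lemma uniform_given {F : Type} [Field F] [Fintype F] {K L : ℕ} (hK : 2 ≤ K)
    {Ω : Type} [Fintype Ω] {p : Ω → ℝ}
    {ZT : Fin K → Type} [∀ k, Fintype (ZT k)]
    (W : Fin K → Ω → Fin L → F) (Z : (k : Fin K) → Ω → ZT k)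
    (hWZ : ∀ (w : Fin K → Fin L → F) (z : (k : Fin K) → ZT k),
      pr p (fun ω => (∀ k, W k ω = w k) ∧ (∀ k, Z k ω = z k))
        = (1 / (Fintype.card F : ℝ) ^ L) ^ K * pr p (fun ω => ∀ k, Z k ω = z k))
    (u : Fin K) (t w : Fin L → F) (z : (k : Fin K) → ZT k) :
    pr p (fun ω => (∑ k ∈ Finset.univ.erase u, W k ω) = t
        ∧ (W u ω, fun k => Z k ω) = (w, z))
      = (Fintype.card (Fin L → F) : ℝ)⁻¹
          * pr p (fun ω => (W u ω, fun k => Z k ω) = (w, z)) := by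
  classical
  set J := (1 / (Fintype.card F : ℝ) ^ L) ^ K * pr p (fun ω => ∀ k, Z k ω = z k) with hJ
  have hdec : ∀ t' : Fin L → F,
      pr p (fun ω => (∑ k ∈ Finset.univ.erase u, W k ω) = t'
          ∧ (W u ω, fun k => Z k ω) = (w, z))
        = ∑ v : Fin K → Fin L → F,
            (if (∑ k ∈ Finset.univ.erase u, v k) = t' ∧ v u = w then J else 0) := by
    intro t'
    have e1 : pr p (fun ω => (∑ k ∈ Finset.univ.erase u, W k ω) = t'
          ∧ (W u ω, fun k => Z k ω) = (w, z))
        = pr p (fun ω => ((∑ k ∈ Finset.univ.erase u, (fun k' => W k' ω) k) = t'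
            ∧ (fun k' => W k' ω) u = w) ∧ (∀ k, Z k ω = z k)) := by
      refine pr_congr (fun ω => ?_)
      show ((∑ k ∈ Finset.univ.erase u, W k ω) = t' ∧ (W u ω, fun k => Z k ω) = (w, z))
        ↔ (((∑ k ∈ Finset.univ.erase u, W k ω) = t' ∧ W u ω = w) ∧ (∀ k, Z k ω = z k))
      simp only [Prod.mk.injEq, funext_iff]
      tauto
    rw [e1, pr_decomp (fun ω => (fun k' => W k' ω))
      (fun v => (∑ k ∈ Finset.univ.erase u, v k) = t' ∧ v u = w)
      (fun ω => ∀ k, Z k ω = z k)]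
    refine Finset.sum_congr rfl fun v _ => ?_
    by_cases hv : (∑ k ∈ Finset.univ.erase u, v k) = t' ∧ v u = w
    · rw [if_pos hv, if_pos hv, hJ, ← hWZ v z]
      refine pr_congr (fun ω => ?_)
      show ((fun k' => W k' ω) = v ∧ (∀ k, Z k ω = z k))
        ↔ ((∀ k, W k ω = v k) ∧ (∀ k, Z k ω = z k))
      simp only [funext_iff]
    · rw [if_neg hv, if_neg hv]
  have hconst : ∀ t₁ t₂ : Fin L → F,
      (∑ v : Fin K → Fin L → F,
          (if (∑ k ∈ Finset.univ.erase u, v k) = t₁ ∧ v u = w then J else 0))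
        = ∑ v : Fin K → Fin L → F,
            (if (∑ k ∈ Finset.univ.erase u, v k) = t₂ ∧ v u = w then J else 0) := by
    intro t₁ t₂
    obtain ⟨v₀, hv₀⟩ := Fintype.exists_ne_of_one_lt_card
      (by rw [Fintype.card_fin]; omega) u
    refine Fintype.sum_equiv (updEquiv v₀ (t₂ - t₁)) _ _ (fun v => ?_)
    obtain ⟨hs, hu'⟩ := sum_erase_updEquiv hv₀ (t₂ - t₁) v
    rw [hs, hu']
    refine if_congr ?_ rfl rfl
    constructor
    · rintro ⟨h1, h2⟩
      exact ⟨by linear_combination h1, h2⟩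
    · rintro ⟨h1, h2⟩
      exact ⟨by linear_combination h1, h2⟩
  have hsum : ∑ t' : Fin L → F, pr p (fun ω => (∑ k ∈ Finset.univ.erase u, W k ω) = t'
        ∧ (W u ω, fun k => Z k ω) = (w, z))
      = pr p (fun ω => (W u ω, fun k => Z k ω) = (w, z)) :=
    sum_pr_and (fun ω => ∑ k ∈ Finset.univ.erase u, W k ω) _
  have hN : (0:ℝ) < (Fintype.card (Fin L → F) : ℝ) := by exact_mod_cast Fintype.card_pos
  have hkey : pr p (fun ω => (W u ω, fun k => Z k ω) = (w, z))
      = (Fintype.card (Fin L → F) : ℝ)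
          * pr p (fun ω => (∑ k ∈ Finset.univ.erase u, W k ω) = t
              ∧ (W u ω, fun k => Z k ω) = (w, z)) := by
    rw [← hsum]
    rw [Finset.sum_congr rfl (fun t' _ => by rw [hdec t', hconst t' t, ← hdec t])]
    rw [Finset.sum_const, Finset.card_univ, nsmul_eq_mul]
  rw [hkey]
  field_simp

/-- **Converse bound `R_Y ≥ 1`.** Assuming only correctness, for every user `u`,
`H(Y_u | W_u, Z_1, …, Z_K) ≥ L`; consequently `H(Y_u) ≥ L`, `L_Y ≥ L`, and
`R_Y = L_Y / L ≥ 1`. -/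
theorem converse_RY
    (F : Type) [Field F] [Fintype F]
    (K L LX LY : ℕ) (hK : 2 ≤ K) (hL : 1 ≤ L)
    (Ω : Type) [Fintype Ω] (p : Ω → ℝ)
    (hp0 : ∀ ω, 0 ≤ p ω) (hp1 : (∑ ω, p ω) = 1)
    (ZT : Fin K → Type) [∀ k, Fintype (ZT k)]
    (W : Fin K → Ω → Fin L → F)
    (Z : (k : Fin K) → Ω → ZT k)
    (X : Fin K → Ω → Fin LX → F)
    (Y : Fin K → Ω → Fin LY → F)
    -- inputs i.i.d. uniform on F^L and independent of the keys
    (hWZ : ∀ (w : Fin K → Fin L → F) (z : (k : Fin K) → ZT k),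
      pr p (fun ω => (∀ k, W k ω = w k) ∧ (∀ k, Z k ω = z k))
        = (1 / (Fintype.card F : ℝ) ^ L) ^ K * pr p (fun ω => ∀ k, Z k ω = z k))
    -- deterministic encoders X_k = φ_k(W_k, Z_k)
    (hX : ∀ k, ∃ φ : (Fin L → F) → ZT k → Fin LX → F, ∀ ω, X k ω = φ (W k ω) (Z k ω))
    -- deterministic server maps Y_k = ψ_k(X_1, …, X_K)
    (hY : ∀ k, ∃ ψ : (Fin K → Fin LX → F) → Fin LY → F, ∀ ω, Y k ω = ψ (fun u => X u ω))
    -- correctness: H(Σ_u W_u | Y_k, W_k, Z_k) = 0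
    (hCorr : ∀ k, condEnt (Fintype.card F) p (fun ω => ∑ u, W u ω)
        (fun ω => (Y k ω, W k ω, Z k ω)) = 0) :
    (∀ u : Fin K, (L : ℝ) ≤ condEnt (Fintype.card F) p (Y u)
        (fun ω => (W u ω, fun k => Z k ω))) ∧
    (∀ u : Fin K, (L : ℝ) ≤ ent (Fintype.card F) p (Y u)) ∧
    L ≤ LY ∧ 1 ≤ (LY : ℝ) / (L : ℝ) := by
  classical
  have hq : 1 < Fintype.card F := Fintype.one_lt_card
  have hqR : (1:ℝ) < (Fintype.card F : ℝ) := by exact_mod_cast hq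
  have hlogcard : ∀ n : ℕ,
      Real.logb (Fintype.card F) (Fintype.card (Fin n → F)) = n := by
    intro n
    rw [Fintype.card_fun, Fintype.card_fin]
    push_cast
    rw [Real.logb_pow, Real.logb_self_eq_one hqR, mul_one]
  -- main bound
  have h1 : ∀ u : Fin K, (L : ℝ) ≤ condEnt (Fintype.card F) p (Y u)
      (fun ω => (W u ω, fun k => Z k ω)) := by
    intro u
    -- Step A: the partial sum T is uniform given C
    have hA : condEnt (Fintype.card F) p
        (fun ω => ∑ k ∈ Finset.univ.erase u, W k ω)
        (fun ω => (W u ω, fun k => Z k ω)) = (L : ℝ) := by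
      rw [condEnt_of_uniform hq hp0 hp1 _ _ (fun t c => ?_), hlogcard L]
      obtain ⟨w, z⟩ := c
      exact uniform_given hK W Z hWZ u t w z
    -- Step B: H(S | C) = H(T | C)
    have hB : condEnt (Fintype.card F) p (fun ω => ∑ k, W k ω)
        (fun ω => (W u ω, fun k => Z k ω))
        = condEnt (Fintype.card F) p (fun ω => ∑ k ∈ Finset.univ.erase u, W k ω)
          (fun ω => (W u ω, fun k => Z k ω)) := by
      have hinj : Function.Injective
          (fun x : (Fin L → F) × ((Fin L → F) × ((k : Fin K) → ZT k)) =>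
            (x.1 + x.2.1, x.2)) := by
        rintro ⟨a, b⟩ ⟨a', b'⟩ h
        obtain ⟨h1, h2⟩ := Prod.ext_iff.1 h
        simp only at h1 h2
        subst h2
        exact Prod.ext_iff.2 ⟨by simpa using h1, rfl⟩
      have e2 : ent (Fintype.card F) p
          (fun ω => ((∑ k, W k ω), (W u ω, fun k => Z k ω)))
          = ent (Fintype.card F) p
            (fun ω => (fun x : (Fin L → F) × ((Fin L → F) × ((k : Fin K) → ZT k)) =>
              (x.1 + x.2.1, x.2))
                ((∑ k ∈ Finset.univ.erase u, W k ω), (W u ω, fun k => Z k ω))) := by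
        refine ent_congr_ae _ (fun ω _ => ?_)
        exact Prod.ext_iff.2 ⟨(Finset.sum_erase_add _ _ (Finset.mem_univ u)).symm, rfl⟩
      have e3 := ent_comp_inj (p := p) (Fintype.card F)
        (fun ω => ((∑ k ∈ Finset.univ.erase u, W k ω), (W u ω, fun k => Z k ω))) hinj
      have e : ent (Fintype.card F) p
          (fun ω => ((∑ k, W k ω), (W u ω, fun k => Z k ω)))
          = ent (Fintype.card F) p
            (fun ω => ((∑ k ∈ Finset.univ.erase u, W k ω), (W u ω, fun k => Z k ω))) :=
        e2.trans e3
      exact congrArg (fun x => x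
        - ent (Fintype.card F) p (fun ω => (W u ω, fun k => Z k ω))) e
    -- Step C: S is determined by (Y_u, C)
    obtain ⟨g, hg⟩ := exists_fun_of_condEnt_zero hq hp0 _ _ (hCorr u)
    have hC : condEnt (Fintype.card F) p (fun ω => ∑ k, W k ω)
        (fun ω => (Y u ω, (W u ω, fun k => Z k ω))) = 0 := by
      refine condEnt_zero_of_fun _ _ _
        (fun yc => g (yc.1, (yc.2.1, yc.2.2 u))) (fun ω hω => ?_)
      exact hg ω hω
    -- swap identity
    have hswap : ent (Fintype.card F) p
        (fun ω => (Y u ω, ((∑ k, W k ω), (W u ω, fun k => Z k ω))))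
        = ent (Fintype.card F) p
          (fun ω => ((∑ k, W k ω), (Y u ω, (W u ω, fun k => Z k ω)))) := by
      have hinj : Function.Injective
          (fun x : (Fin L → F) × ((Fin LY → F) × ((Fin L → F) × ((k : Fin K) → ZT k))) =>
            (x.2.1, (x.1, x.2.2))) := by
        rintro ⟨a, b, c⟩ ⟨a', b', c'⟩ h
        simp only [Prod.mk.injEq] at h
        obtain ⟨h1, h2, h3⟩ := h
        subst h1; subst h2; subst h3; rfl
      exact ent_comp_inj (p := p) (Fintype.card F)
        (fun ω => ((∑ k, W k ω), (Y u ω, (W u ω, fun k => Z k ω)))) hinj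
    have hYC : 0 ≤ condEnt (Fintype.card F) p (Y u)
        (fun ω => ((∑ k, W k ω), (W u ω, fun k => Z k ω))) :=
      condEnt_nonneg hq hp0 _ _
    have hid : condEnt (Fintype.card F) p (Y u) (fun ω => (W u ω, fun k => Z k ω))
        = condEnt (Fintype.card F) p (fun ω => ∑ k, W k ω)
            (fun ω => (W u ω, fun k => Z k ω))
          - condEnt (Fintype.card F) p (fun ω => ∑ k, W k ω)
              (fun ω => (Y u ω, (W u ω, fun k => Z k ω)))
          + condEnt (Fintype.card F) p (Y u)
              (fun ω => ((∑ k, W k ω), (W u ω, fun k => Z k ω))) := by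
      simp only [condEnt]
      rw [hswap]
      ring
    rw [hid, hB, hA, hC]
    linarith
  have h2 : ∀ u : Fin K, (L : ℝ) ≤ ent (Fintype.card F) p (Y u) := by
    intro u
    have hsub := ent_pair_le hq hp0 hp1 (Y u) (fun ω => (W u ω, fun k => Z k ω))
    have := h1 u
    unfold condEnt at this
    linarith
  have u₀ : Fin K := ⟨0, by omega⟩
  have h3 : L ≤ LY := by
    have hY3 : ent (Fintype.card F) p (Y u₀) ≤ (LY : ℝ) := by
      have := ent_le_card hq hp0 hp1 (Y u₀)
      rwa [hlogcard LY] at this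
    exact_mod_cast le_trans (h2 u₀) hY3
  refine ⟨h1, h2, h3, ?_⟩
  have hL0 : (0:ℝ) < (L:ℝ) := by exact_mod_cast hL
  rw [le_div_iff₀ hL0, one_mul]
  exact_mod_cast h3
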